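/- Let (Ŝ_T)_{T∈ℕ} be a sequence of random p×p matrices that are almost surely symmetric positive definite and satisfy √T(Ŝ_T − I_p) = O_p(1). Then √T(Ŝ_T^{−1/2} − I_p) = O_p(1), where Ŝ_T^{−1/2} denotes the inverse of the unique symmetric positive definite square root of Ŝ_T. -/

import Mathlib

open MeasureTheory Filter Matrix Finset
open scoped Topology ENNReal NNReal Kronecker

noncomputable section

/-- Squared Frobenius norm of a real matrix. -/
def frobSq {ι κ : Type*} [Fintype ι] [Fintype κ] (M : Matrix ι κ ℝ) : ℝ :=
  ∑ i, ∑ j, (M i j) ^ 2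

/-- Frobenius norm of a real matrix. -/
def frobNorm {ι κ : Type*} [Fintype ι] [Fintype κ] (M : Matrix ι κ ℝ) : ℝ :=
  Real.sqrt (frobSq M)

/-- Euclidean norm of a vector. -/
def euclNorm {ι : Type*} [Fintype ι] (x : ι → ℝ) : ℝ :=
  Real.sqrt (∑ i, (x i) ^ 2)

/-- `X_T = O_p(1)` (boundedness in probability), matrix version, Frobenius norm. -/
def MatIsOp {Ω ι κ : Type*} [MeasurableSpace Ω] [Fintype ι] [Fintype κ]
    (μ : Measure Ω) (X : ℕ → Ω → Matrix ι κ ℝ) : Prop :=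
  ∀ ε : ℝ, 0 < ε → ∃ M : ℝ, 0 < M ∧ ∀ T, μ {ω | M < frobNorm (X T ω)} ≤ ENNReal.ofReal ε

/-- `X_T = O_p(1)` (boundedness in probability), vector version, Euclidean norm. -/
def VecIsOp {Ω ι : Type*} [MeasurableSpace Ω] [Fintype ι]
    (μ : Measure Ω) (X : ℕ → Ω → ι → ℝ) : Prop :=
  ∀ ε : ℝ, 0 < ε → ∃ M : ℝ, 0 < M ∧ ∀ T, μ {ω | M < euclNorm (X T ω)} ≤ ENNReal.ofReal ε

/-- Convergence to zero in probability, matrix version (Frobenius norm). -/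
def MatTendstoP0 {Ω ι κ : Type*} [MeasurableSpace Ω] [Fintype ι] [Fintype κ]
    (μ : Measure Ω) (X : ℕ → Ω → Matrix ι κ ℝ) : Prop :=
  ∀ ε : ℝ, 0 < ε → Tendsto (fun T => μ {ω | ε < frobNorm (X T ω)}) atTop (𝓝 0)

/-- Convergence to zero in probability, real-valued version. -/
def RealTendstoP0 {Ω : Type*} [MeasurableSpace Ω]
    (μ : Measure Ω) (X : ℕ → Ω → ℝ) : Prop :=
  ∀ ε : ℝ, 0 < ε → Tendsto (fun T => μ {ω | ε < |X T ω|}) atTop (𝓝 0)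

/-- Convergence in distribution: weak convergence of the laws to the measure `ν`. -/
def TendstoInDist {Ω E : Type*} [MeasurableSpace Ω] [MeasurableSpace E] [TopologicalSpace E]
    (μ : Measure Ω) (X : ℕ → Ω → E) (ν : Measure E) : Prop :=
  ∀ f : BoundedContinuousFunction E ℝ,
    Tendsto (fun T => ∫ ω, f (X T ω) ∂μ) atTop (𝓝 (∫ x, f x ∂ν))

open scoped ComplexOrder in
/-- The square root of a positive semidefinite matrix, as defined in the older Mathlib
(`Matrix.PosSemidef.sqrt`, since removed). -/
def Matrix.PosSemidef.sqrt {n 𝕜 : Type*} [Fintype n] [DecidableEq n] [RCLike 𝕜]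
    {A : Matrix n n 𝕜} (hA : A.PosSemidef) : Matrix n n 𝕜 :=
  hA.1.eigenvectorUnitary.1 * diagonal ((↑) ∘ (√·) ∘ hA.1.eigenvalues) *
  (star hA.1.eigenvectorUnitary : Matrix n n 𝕜)

open Classical in
/-- The centered (possibly degenerate) Gaussian distribution `N(0, V)` on `ι → ℝ`,
realized as the law of `V^{1/2} z` with `z` standard Gaussian. -/
def gaussianOfCov {ι : Type*} [Fintype ι] [DecidableEq ι] (V : Matrix ι ι ℝ) :
    Measure (ι → ℝ) :=
  if h : V.PosSemidef then
    Measure.map (fun z => h.sqrt.mulVec z)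
      (Measure.pi fun _ : ι => ProbabilityTheory.gaussianReal 0 1)
  else 0

/-- Chi-squared distribution with `k` degrees of freedom: Gamma, shape `k/2`, rate `1/2`. -/
def chiSq (k : ℝ) : Measure ℝ := ProbabilityTheory.gammaMeasure (k / 2) (1 / 2)

open Classical in
/-- Inverse of the unique symmetric positive definite square root of `S`
(junk value `0` if `S` is not positive definite). -/
def invSqrt {ι : Type*} [Fintype ι] [DecidableEq ι] (S : Matrix ι ι ℝ) : Matrix ι ι ℝ :=
  if h : S.PosDef then (h.posSemidef.sqrt)⁻¹ else 0

/-- Column-vectorization of an `r × r` matrix, indexed by (column, row) pairs. -/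
def vecM {r : ℕ} (M : Matrix (Fin r) (Fin r) ℝ) : Fin r × Fin r → ℝ :=
  fun q => M q.2 q.1

/-- The commutation matrix `K_rr = ∑ i j, E_r^{ij} ⊗ E_r^{ji}`. -/
def commMatrix (r : ℕ) : Matrix (Fin r × Fin r) (Fin r × Fin r) ℝ :=
  ∑ i : Fin r, ∑ j : Fin r, Matrix.single i j (1 : ℝ) ⊗ₖ Matrix.single j i (1 : ℝ)

/-- The matrix `D_rr = ∑ i, E_r^{ii} ⊗ E_r^{ii}`. -/
def dblDiagMatrix (r : ℕ) : Matrix (Fin r × Fin r) (Fin r × Fin r) ℝ :=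
  ∑ i : Fin r, Matrix.single i i (1 : ℝ) ⊗ₖ Matrix.single i i (1 : ℝ)

/-- The all-ones matrix `J_r`. -/
def onesMat (r : ℕ) : Matrix (Fin r) (Fin r) ℝ := Matrix.of fun _ _ => 1

/-!
Diagonalising `S = U diag(λ) Uᵀ` reduces everything to the eigenvalues:
`‖S - 1‖² = ∑ (λᵢ - 1)²` and `‖S^{-1/2} - 1‖² = ∑ (λᵢ^{-1/2} - 1)²`. If `‖S - 1‖ ≤ 1/2` then every
`λᵢ ≥ 1/2`, where `|λ^{-1/2} - 1| ≤ |λ - 1|`; so once `√T ≥ 2M`, the event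
`√T ‖S_T - 1‖ ≤ M` forces `√T ‖S_T^{-1/2} - 1‖ ≤ M`. Each of the finitely many remaining `T` is
handled by tightness of a single random variable; rather than proving the matrix square root
measurable, we dominate `‖S^{-1/2} - 1‖² ≤ tr S⁻¹ + p`, whose right-hand side is a rational function
of the entries of `S`.
-/

lemma frobSq_eq_trace {n : Type*} [Fintype n] (M : Matrix n n ℝ) : frobSq M = (Mᵀ * M).trace := by
  simp only [frobSq, trace, Matrix.diag, mul_apply, transpose_apply, sq]
  exact Finset.sum_comm

lemma frobNorm_smul {ι κ : Type*} [Fintype ι] [Fintype κ] (c : ℝ) (M : Matrix ι κ ℝ) :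
    frobNorm (c • M) = |c| * frobNorm M := by
  have : frobSq (c • M) = c ^ 2 * frobSq M := by
    simp only [frobSq, Matrix.smul_apply, smul_eq_mul, mul_pow, Finset.mul_sum]
  rw [frobNorm, frobNorm, this, Real.sqrt_mul (sq_nonneg c), Real.sqrt_sq_eq_abs]

lemma Real.inv_sqrt_sub_one_sq_le_sub_one_sq {x : ℝ} (hx : 1 / 2 ≤ x) :
    ((√x)⁻¹ - 1) ^ 2 ≤ (x - 1) ^ 2 := by
  have hs : 0 < √x := Real.sqrt_pos.2 (by linarith)
  have hsx : √x ^ 2 = x := Real.sq_sqrt (by linarith)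
  have hmul : 1 ≤ √x * (√x + 1) := by nlinarith
  have hinv : (√x)⁻¹ - 1 = (1 - √x) / √x := by field_simp
  rw [hinv, div_pow, div_le_iff₀ (by positivity)]
  calc (1 - √x) ^ 2 = (1 - √x) ^ 2 * 1 := (mul_one _).symm
    _ ≤ (1 - √x) ^ 2 * (√x * (√x + 1)) ^ 2 := by gcongr; exact one_le_pow₀ hmul
    _ = (x - 1) ^ 2 * √x ^ 2 := by linear_combination (-(√x ^ 2) * (2 - √x ^ 2 - x)) * hsx

lemma Real.inv_sqrt_sub_one_sq_le_inv_add_one {x : ℝ} (hx : 0 < x) :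
    ((√x)⁻¹ - 1) ^ 2 ≤ x⁻¹ + 1 := by
  have ha : 0 ≤ (√x)⁻¹ := by positivity
  have hsq : ((√x)⁻¹) ^ 2 = x⁻¹ := by rw [inv_pow, Real.sq_sqrt hx.le]
  nlinarith

namespace Matrix

variable {n : Type*} [Fintype n] [DecidableEq n]

lemma continuousOn_spectrum (A : Matrix n n ℝ) (f : ℝ → ℝ) : ContinuousOn f (spectrum ℝ A) :=
  A.finite_real_spectrum.continuousOn f

namespace IsHermitian

variable {A : Matrix n n ℝ}

lemma trace_cfc (hA : A.IsHermitian) (f : ℝ → ℝ) :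
    (cfc f A).trace = ∑ i, f (hA.eigenvalues i) := by
  rw [hA.cfc_eq, IsHermitian.cfc, Unitary.conjStarAlgAut_apply, trace_mul_cycle,
    Unitary.coe_star_mul_self, one_mul, trace_diagonal]
  rfl

lemma frobSq_cfc (hA : A.IsHermitian) (f : ℝ → ℝ) :
    frobSq (cfc f A) = ∑ i, f (hA.eigenvalues i) ^ 2 := by
  have hsymm : (cfc f A)ᵀ = cfc f A := (cfc_predicate f A : IsSelfAdjoint (cfc f A))
  rw [frobSq_eq_trace, hsymm,
    ← cfc_mul f f A (A.continuousOn_spectrum f) (A.continuousOn_spectrum f), hA.trace_cfc]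
  simp only [sq]

lemma cfc_sub_one (hA : A.IsHermitian) (f : ℝ → ℝ) :
    cfc (fun x => f x - 1) A = cfc f A - 1 := by
  rw [cfc_sub f (fun _ => 1) A (A.continuousOn_spectrum f) (A.continuousOn_spectrum _)]
  exact congrArg (cfc f A - ·) (cfc_const_one ℝ A hA)

end IsHermitian

namespace PosDef

variable {S : Matrix n n ℝ}

lemma pos_of_mem_spectrum (hS : S.PosDef) {x : ℝ} (hx : x ∈ spectrum ℝ S) : 0 < x := by
  rw [hS.isHermitian.spectrum_real_eq_range_eigenvalues] at hx
  obtain ⟨i, rfl⟩ := hx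
  exact hS.eigenvalues_pos i

lemma sqrt_eq_cfc (hS : S.PosDef) : hS.posSemidef.sqrt = cfc Real.sqrt S := by
  rw [hS.isHermitian.cfc_eq, IsHermitian.cfc, Unitary.conjStarAlgAut_apply]
  rfl

lemma invSqrt_eq_cfc (hS : S.PosDef) : invSqrt S = cfc (fun x => (√x)⁻¹) S := by
  rw [invSqrt, dif_pos hS, hS.sqrt_eq_cfc, nonsing_inv_eq_ringInverse]
  exact (cfc_inv Real.sqrt S (fun x hx => (Real.sqrt_pos.2 (hS.pos_of_mem_spectrum hx)).ne')
    (S.continuousOn_spectrum _) hS.isHermitian).symm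

lemma trace_inv (hS : S.PosDef) : S⁻¹.trace = ∑ i, (hS.isHermitian.eigenvalues i)⁻¹ := by
  rw [nonsing_inv_eq_ringInverse,
    ← cfc_ringInverse_id (R := ℝ) _ hS.isUnit hS.isHermitian.isSelfAdjoint,
    hS.isHermitian.trace_cfc]

lemma frobSq_sub_one (hS : S.PosDef) :
    frobSq (S - 1) = ∑ i, (hS.isHermitian.eigenvalues i - 1) ^ 2 := by
  rw [← hS.isHermitian.frobSq_cfc (fun x => x - 1), hS.isHermitian.cfc_sub_one]
  exact congrArg (fun M => frobSq (M - 1)) (cfc_id' ℝ S hS.isHermitian).symm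

lemma frobSq_invSqrt_sub_one (hS : S.PosDef) :
    frobSq (invSqrt S - 1) = ∑ i, ((√(hS.isHermitian.eigenvalues i))⁻¹ - 1) ^ 2 := by
  rw [← hS.isHermitian.frobSq_cfc (fun x => (√x)⁻¹ - 1), hS.isHermitian.cfc_sub_one,
    hS.invSqrt_eq_cfc]

lemma half_le_eigenvalues (hS : S.PosDef) (h : frobNorm (S - 1) ≤ 1 / 2) (i : n) :
    1 / 2 ≤ hS.isHermitian.eigenvalues i := by
  have hsq : frobSq (S - 1) ≤ (1 / 2) ^ 2 := (Real.sqrt_le_iff.1 h).2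
  have hi : (hS.isHermitian.eigenvalues i - 1) ^ 2 ≤ frobSq (S - 1) := by
    rw [hS.frobSq_sub_one]
    exact Finset.single_le_sum (f := fun j => (hS.isHermitian.eigenvalues j - 1) ^ 2)
      (fun _ _ => sq_nonneg _) (Finset.mem_univ i)
  nlinarith

lemma frobNorm_invSqrt_sub_one_le (hS : S.PosDef) (h : frobNorm (S - 1) ≤ 1 / 2) :
    frobNorm (invSqrt S - 1) ≤ frobNorm (S - 1) := by
  refine Real.sqrt_le_sqrt ?_
  rw [hS.frobSq_invSqrt_sub_one, hS.frobSq_sub_one]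
  exact Finset.sum_le_sum fun i _ =>
    Real.inv_sqrt_sub_one_sq_le_sub_one_sq (hS.half_le_eigenvalues h i)

lemma frobNorm_smul_invSqrt_sub_one_le (hS : S.PosDef) {c M : ℝ} (hM : 0 < M) (hc : 2 * M ≤ c)
    (h : frobNorm (c • (S - 1)) ≤ M) : frobNorm (c • (invSqrt S - 1)) ≤ M := by
  have hc₀ : 0 < c := by linarith
  rw [frobNorm_smul, abs_of_pos hc₀] at h ⊢
  have hclose : frobNorm (S - 1) ≤ 1 / 2 := by
    rw [← mul_le_mul_iff_of_pos_left hc₀]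
    linarith
  calc c * frobNorm (invSqrt S - 1) ≤ c * frobNorm (S - 1) := by
        gcongr; exact hS.frobNorm_invSqrt_sub_one_le hclose
    _ ≤ M := h

lemma frobNorm_invSqrt_sub_one_le_sqrt_trace_inv (hS : S.PosDef) :
    frobNorm (invSqrt S - 1) ≤ √(S⁻¹.trace + Fintype.card n) := by
  refine Real.sqrt_le_sqrt ?_
  rw [hS.frobSq_invSqrt_sub_one, hS.trace_inv, Finset.card_univ.symm, Finset.card_eq_sum_ones,
    Nat.cast_sum, Nat.cast_one, ← Finset.sum_add_distrib]
  exact Finset.sum_le_sum fun i _ =>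
    Real.inv_sqrt_sub_one_sq_le_inv_add_one (hS.eigenvalues_pos i)

end PosDef

end Matrix

namespace MeasureTheory

variable {Ω : Type*} [MeasurableSpace Ω] {μ : Measure Ω}

lemma tendsto_measure_lt_atTop [IsFiniteMeasure μ] {g : Ω → ℝ} (hg : Measurable g) :
    Tendsto (fun M : ℝ => μ {ω | M < g ω}) atTop (𝓝 0) := by
  have hempty : ⋂ M : ℝ, {ω | M < g ω} = ∅ :=
    Set.eq_empty_of_forall_notMem fun ω hω =>
      lt_irrefl (g ω) (Set.mem_iInter.1 hω (g ω))
  have := tendsto_measure_iInter_atTop (μ := μ) (s := fun M : ℝ => {ω | M < g ω})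
    (fun M => (measurableSet_lt measurable_const hg).nullMeasurableSet)
    (fun M M' hMM' ω hω => lt_of_le_of_lt hMM' hω) ⟨0, measure_ne_top μ _⟩
  rwa [hempty, measure_empty] at this

lemma eventually_measure_lt_le [IsFiniteMeasure μ] {f g : Ω → ℝ} (hg : Measurable g)
    (hfg : f ≤ᵐ[μ] g) {δ : ℝ≥0∞} (hδ : 0 < δ) :
    ∀ᶠ M in atTop, μ {ω | M < f ω} ≤ δ := by
  filter_upwards [(tendsto_order.1 (tendsto_measure_lt_atTop (μ := μ) hg)).2 δ hδ] with M hM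
  refine le_trans (measure_mono_ae ?_) hM.le
  filter_upwards [hfg] with ω hω hlt
  exact lt_of_lt_of_le hlt hω

lemma exists_forall_measure_lt_le {X : ℕ → Ω → ℝ} {δ : ℝ≥0∞} {M : ℝ}
    (hlarge : ∀ᶠ T in atTop, μ {ω | M < X T ω} ≤ δ)
    (hsmall : ∀ T, ∀ᶠ K in atTop, μ {ω | K < X T ω} ≤ δ) :
    ∃ K, 0 < K ∧ ∀ T, μ {ω | K < X T ω} ≤ δ := by
  obtain ⟨T₀, hT₀⟩ := eventually_atTop.1 hlarge
  obtain ⟨K, hK, hMK, hKsmall⟩ := ((eventually_gt_atTop 0).and ((eventually_ge_atTop M).and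
    ((Finset.range T₀).eventually_all.2 fun T _ => hsmall T))).exists
  refine ⟨K, hK, fun T => ?_⟩
  by_cases hT : T < T₀
  · exact hKsmall T (Finset.mem_range.2 hT)
  · exact le_trans (measure_mono fun ω hω => lt_of_le_of_lt hMK hω) (hT₀ T (not_lt.1 hT))

end MeasureTheory

lemma Matrix.measurable_trace_inv {Ω n : Type*} [MeasurableSpace Ω] [Fintype n] [DecidableEq n]
    {S : Ω → Matrix n n ℝ} (hS : ∀ i j, Measurable fun ω => S ω i j) :
    Measurable fun ω => (S ω)⁻¹.trace := by
  have hS' : Measurable fun ω i j => S ω i j :=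
    measurable_pi_lambda _ fun i => measurable_pi_lambda _ fun j => hS i j
  have hdet : Continuous fun M : n → n → ℝ => (of M).det := continuous_id.matrix_det
  have hadj : Continuous fun M : n → n → ℝ => (of M).adjugate.trace :=
    continuous_id.matrix_adjugate.matrix_trace
  simp only [inv_def, trace_smul, Ring.inverse_eq_inv', smul_eq_mul]
  exact ((hdet.measurable.comp hS').inv).mul (hadj.measurable.comp hS')

theorem statement4 {Ω : Type*} [MeasurableSpace Ω] (μ : Measure Ω) [IsProbabilityMeasure μ]
    (p : ℕ)
    (S : ℕ → Ω → Matrix (Fin p) (Fin p) ℝ)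
    (hSmeas : ∀ T i j, Measurable fun ω => S T ω i j)
    (hSpd : ∀ T, ∀ᵐ ω ∂μ, (S T ω).PosDef)
    (hSop : MatIsOp μ fun T ω => Real.sqrt T • (S T ω - 1)) :
    MatIsOp μ fun T ω => Real.sqrt T • (invSqrt (S T ω) - 1) := by
  intro ε hε
  obtain ⟨M, hM, hSM⟩ := hSop ε hε
  refine exists_forall_measure_lt_le (M := M) ?_ fun T => ?_
  · filter_upwards [eventually_ge_atTop ⌈(2 * M) ^ 2⌉₊] with T hT
    have hc : 2 * M ≤ √T := Real.le_sqrt_of_sq_le (Nat.ceil_le.1 hT)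
    refine le_trans (measure_mono_ae ?_) (hSM T)
    filter_upwards [hSpd T] with ω hω hlt
    exact lt_of_not_ge fun hle => hlt.not_ge (hω.frobNorm_smul_invSqrt_sub_one_le hM hc hle)
  · refine eventually_measure_lt_le (g := fun ω => √T * √((S T ω)⁻¹.trace + p))
      (measurable_const.mul ((measurable_trace_inv (hSmeas T)).add_const _).sqrt) ?_
      (ENNReal.ofReal_pos.2 hε)
    filter_upwards [hSpd T] with ω hω
    rw [frobNorm_smul, abs_of_nonneg (Real.sqrt_nonneg _)]
    simpa using mul_le_mul_of_nonneg_left hω.frobNorm_invSqrt_sub_one_le_sqrt_trace_inv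
      (Real.sqrt_nonneg (T : ℝ))
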